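/- If h : ℝ → ℝ is bounded and measurable, then the solution y of the Stein equation satisfies sup_{x∈ℝ} |x·y(x)| ≤ 2(1−ψ)⁻¹·‖h‖_∞. -/

import Mathlib

open MeasureTheory ProbabilityTheory Real Set

noncomputable section

/-- `h̄_ψ = E h(N)` for `N ~ N(0, (1-ψ)⁻¹)`. -/
def gaussMean (ψ : ℝ) (h : ℝ → ℝ) : ℝ :=
  ∫ x, h x ∂(gaussianReal 0 (Real.toNNReal (1 - ψ)⁻¹))

/-- The bounded solution `y` of the Stein equation
`y'(x) - (1-ψ) x y(x) = h(x) - h̄_ψ`, given explicitly by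
`y(x) = -e^{(1-ψ)x²/2} ∫_x^∞ e^{-(1-ψ)t²/2} (h(t) - h̄_ψ) dt`. -/
def steinSol (ψ : ℝ) (h : ℝ → ℝ) (x : ℝ) : ℝ :=
  - Real.exp ((1 - ψ) * x ^ 2 / 2) *
      ∫ t in Set.Ioi x, Real.exp (-((1 - ψ) * t ^ 2 / 2)) * (h t - gaussMean ψ h)

/-! With `g t = exp (-((1 - ψ) t² / 2))` and `f = g • (h - h̄_ψ)` we have `|f| ≤ 2 ‖h‖_∞ g`
and `y x = -(g x)⁻¹ ∫_x^∞ f`. For `x ≥ 0` the Mills-ratio estimate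
`x ∫_x^∞ g ≤ ∫_x^∞ t g t dt = g x / (1 - ψ)` gives the bound. For `x < 0`, `∫ f = 0` because
`g` is a multiple of the density of `N`, so `∫_x^∞ f = -∫_{-∞}^x f`, and reflecting `t ↦ -t`
reduces to the first case. -/

open Filter Topology

section GaussianWeight

variable {a : ℝ}

lemma integrable_exp_neg_mul_sq_div_two (ha : 0 < a) :
    Integrable fun t : ℝ => exp (-(a * t ^ 2 / 2)) := by
  simpa only [neg_mul, div_mul_eq_mul_div] using integrable_exp_neg_mul_sq (half_pos ha)

lemma integrable_mul_exp_neg_mul_sq_div_two (ha : 0 < a) :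
    Integrable fun t : ℝ => t * exp (-(a * t ^ 2 / 2)) := by
  simpa only [neg_mul, div_mul_eq_mul_div] using integrable_mul_exp_neg_mul_sq (half_pos ha)

lemma tendsto_exp_neg_mul_sq_div_two_atTop (ha : 0 < a) :
    Tendsto (fun t : ℝ => exp (-(a * t ^ 2 / 2))) atTop (𝓝 0) :=
  tendsto_exp_atBot.comp <| tendsto_neg_atTop_atBot.comp <|
    ((tendsto_pow_atTop two_ne_zero).const_mul_atTop ha).atTop_div_const two_pos

lemma integral_Ioi_mul_exp_neg_mul_sq_div_two (ha : 0 < a) (x : ℝ) :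
    ∫ t in Ioi x, t * exp (-(a * t ^ 2 / 2)) = exp (-(a * x ^ 2 / 2)) / a := by
  have hderiv (t : ℝ) : HasDerivAt (fun t : ℝ => -exp (-(a * t ^ 2 / 2)) / a)
      (t * exp (-(a * t ^ 2 / 2))) t := by
    refine ((((hasDerivAt_pow 2 t).const_mul a).div_const 2).fun_neg.exp.fun_neg.div_const a
      ).congr_deriv ?_
    field_simp
    ring
  rw [integral_Ioi_of_hasDerivAt_of_tendsto' (fun t _ => hderiv t)
    (integrable_mul_exp_neg_mul_sq_div_two ha).integrableOn
    (by simpa using ((tendsto_exp_neg_mul_sq_div_two_atTop ha).neg.div_const a))]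
  ring

lemma abs_mul_setIntegral_Ioi_le_of_nonneg {f : ℝ → ℝ} {K x : ℝ} (ha : 0 < a) (hx : 0 ≤ x)
    (hf : ∀ t, |f t| ≤ K * exp (-(a * t ^ 2 / 2))) :
    |x * ∫ t in Ioi x, f t| ≤ K * exp (-(a * x ^ 2 / 2)) / a := by
  have hK : 0 ≤ K := nonneg_of_mul_nonneg_left ((abs_nonneg _).trans (hf 0)) (exp_pos _)
  have hg := (integrable_exp_neg_mul_sq_div_two ha).const_mul K
  calc |x * ∫ t in Ioi x, f t| = x * |∫ t in Ioi x, f t| := by rw [abs_mul, abs_of_nonneg hx]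
    _ ≤ x * ∫ t in Ioi x, K * exp (-(a * t ^ 2 / 2)) := by
      gcongr
      exact norm_integral_le_of_norm_le hg.integrableOn
        (ae_of_all _ fun t => (Real.norm_eq_abs (f t)).trans_le (hf t))
    _ = ∫ t in Ioi x, K * x * exp (-(a * t ^ 2 / 2)) := by
      simp_rw [mul_assoc, integral_const_mul]
      ring
    _ ≤ ∫ t in Ioi x, K * t * exp (-(a * t ^ 2 / 2)) := by
      refine setIntegral_mono_on ?_ ?_ measurableSet_Ioi fun t ht => ?_
      · simpa only [mul_assoc] using
          ((integrable_exp_neg_mul_sq_div_two ha).const_mul x).const_mul K |>.integrableOn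
      · simpa only [mul_assoc] using
          ((integrable_mul_exp_neg_mul_sq_div_two ha).const_mul K).integrableOn
      · gcongr
        exact ht.le
    _ = K * exp (-(a * x ^ 2 / 2)) / a := by
      simp_rw [mul_assoc, integral_const_mul, integral_Ioi_mul_exp_neg_mul_sq_div_two ha]
      ring

lemma abs_mul_setIntegral_Ioi_le {f : ℝ → ℝ} {K : ℝ} (ha : 0 < a) (hf_int : Integrable f)
    (hf_zero : ∫ t, f t = 0) (hf : ∀ t, |f t| ≤ K * exp (-(a * t ^ 2 / 2))) (x : ℝ) :
    |x * ∫ t in Ioi x, f t| ≤ K * exp (-(a * x ^ 2 / 2)) / a := by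
  rcases le_or_gt 0 x with hx | hx
  · exact abs_mul_setIntegral_Ioi_le_of_nonneg ha hx hf
  have hreflect : ∫ t in Ioi x, f t = -∫ t in Ioi (-x), f (-t) := by
    rw [integral_comp_neg_Ioi, neg_neg, eq_neg_iff_add_eq_zero, add_comm,
      intervalIntegral.integral_Iic_add_Ioi hf_int.integrableOn hf_int.integrableOn, hf_zero]
  have := abs_mul_setIntegral_Ioi_le_of_nonneg (f := fun t => f (-t)) ha (neg_nonneg.2 hx.le)
    fun t => by simpa only [neg_sq] using hf (-t)
  rw [hreflect, mul_neg, abs_neg]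
  rwa [neg_sq, neg_mul, abs_neg] at this

end GaussianWeight

lemma abs_gaussMean_le {ψ C : ℝ} {h : ℝ → ℝ} (hC : ∀ x, |h x| ≤ C) : |gaussMean ψ h| ≤ C := by
  simpa [gaussMean] using
    norm_integral_le_of_norm_le_const (μ := gaussianReal 0 (Real.toNNReal (1 - ψ)⁻¹))
      (ae_of_all _ fun x => (Real.norm_eq_abs (h x)).trans_le (hC x))

lemma exp_neg_mul_sq_div_two_eq_mul_gaussianPDFReal {a : ℝ} (ha : 0 < a) (t : ℝ) :
    exp (-(a * t ^ 2 / 2)) = √(2 * π * a⁻¹) * gaussianPDFReal 0 (Real.toNNReal a⁻¹) t := by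
  rw [gaussianPDFReal, Real.coe_toNNReal _ (inv_pos.2 ha).le, ← mul_assoc,
    mul_inv_cancel₀ (by positivity), one_mul, sub_zero]
  field_simp

lemma integral_exp_mul_sub_gaussMean_eq_zero {ψ : ℝ} (hψ : ψ < 1) {h : ℝ → ℝ}
    (hh : Integrable h (gaussianReal 0 (Real.toNNReal (1 - ψ)⁻¹))) :
    ∫ t, exp (-((1 - ψ) * t ^ 2 / 2)) * (h t - gaussMean ψ h) = 0 := by
  have ha : 0 < 1 - ψ := sub_pos.2 hψ
  have hv : Real.toNNReal (1 - ψ)⁻¹ ≠ 0 := by simpa using ha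
  simp_rw [exp_neg_mul_sq_div_two_eq_mul_gaussianPDFReal ha, mul_assoc, integral_const_mul,
    ← smul_eq_mul (a := gaussianPDFReal _ _ _), ← integral_gaussianReal_eq_integral_smul hv,
    integral_sub hh (integrable_const _), gaussMean]
  simp

theorem stmt11_general (ψ : ℝ) (hψ1 : ψ < 1) (h : ℝ → ℝ) (hmeas : Measurable h) (C : ℝ) (hC : ∀ x, |h x| ≤ C) :
    ∀ x : ℝ, |x * steinSol ψ h x| ≤ 2 / (1 - ψ) * C := by
  intro x
  have ha : 0 < 1 - ψ := sub_pos.2 hψ1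
  set f : ℝ → ℝ := fun t => exp (-((1 - ψ) * t ^ 2 / 2)) * (h t - gaussMean ψ h)
  have hf_bound (t : ℝ) : |f t| ≤ 2 * C * exp (-((1 - ψ) * t ^ 2 / 2)) := by
    rw [abs_mul, abs_of_pos (exp_pos _), mul_comm]
    gcongr
    linarith [abs_sub (h t) (gaussMean ψ h), hC t, abs_gaussMean_le (ψ := ψ) hC]
  have hf_int : Integrable f := ((integrable_exp_neg_mul_sq_div_two ha).const_mul (2 * C)).mono'
    (by fun_prop) (ae_of_all _ hf_bound)
  have hf_zero : ∫ t, f t = 0 := integral_exp_mul_sub_gaussMean_eq_zero hψ1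
    (.of_bound hmeas.aestronglyMeasurable C
      (ae_of_all _ fun x => (Real.norm_eq_abs (h x)).trans_le (hC x)))
  calc |x * steinSol ψ h x| = exp ((1 - ψ) * x ^ 2 / 2) * |x * ∫ t in Ioi x, f t| := by
        rw [steinSol, mul_left_comm, abs_mul, abs_neg, abs_of_pos (exp_pos _)]
    _ ≤ exp ((1 - ψ) * x ^ 2 / 2) * (2 * C * exp (-((1 - ψ) * x ^ 2 / 2)) / (1 - ψ)) := by
        gcongr
        exact abs_mul_setIntegral_Ioi_le ha hf_int hf_zero hf_bound x
    _ = 2 / (1 - ψ) * C := by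
        rw [exp_neg]
        field_simp

theorem stmt11 (ψ : ℝ) (hψ0 : 0 ≤ ψ) (hψ1 : ψ < 1) (h : ℝ → ℝ) (hmeas : Measurable h) (C : ℝ) (hC : ∀ x, |h x| ≤ C) :
    ∀ x : ℝ, |x * steinSol ψ h x| ≤ 2 / (1 - ψ) * C :=
  stmt11_general ψ hψ1 h hmeas C hC

end
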